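/- arXiv:1111.5560 — 6 statements merged into one kernel-verified Lean document; each statement's English description precedes it below -/
import Mathlib

section
/- Let A be a complete unital locally convex algebra and A' a dense unital subalgebra of A. If I is a proper closed left ideal of A' (closed in the subspace topology), then the closure of I in A is a proper closed left ideal of A. -/
/-- `I` is a left ideal of the subalgebra (given as a subset) `B` of `A`. -/
structure IsLeftIdealIn {A : Type*} [Ring A] [Algebra ℂ A] (B I : Set A) : Prop where
  subset : I ⊆ B
  zero_mem : (0 : A) ∈ I
  add_mem : ∀ {x y : A}, x ∈ I → y ∈ I → x + y ∈ I
  smul_mem : ∀ (c : ℂ) {x : A}, x ∈ I → c • x ∈ I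
  mul_mem : ∀ {b x : A}, b ∈ B → x ∈ I → b * x ∈ I

/-! Multiplication is continuous, so the closure of a left ideal of `A'` is a left ideal of
`closure A' = A`. It stays proper because `I` is closed in `A'`, i.e. `closure I ∩ A' = I`,
and `1 ∈ A'` is not in `I`. -/

open Set

theorem IsLeftIdealIn.closure {A : Type*} [Ring A] [Algebra ℂ A] [TopologicalSpace A]
    [IsTopologicalRing A] {B : Subalgebra ℂ A} {I : Set A} (hI : IsLeftIdealIn (B : Set A) I) :
    IsLeftIdealIn (_root_.closure (B : Set A)) (_root_.closure I) := by
  have left_mul_mem : ∀ a ∈ B, ∀ x ∈ _root_.closure I, a * x ∈ _root_.closure I :=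
    fun a ha x hx => map_mem_closure (continuous_const_mul a) hx fun _ hy => hI.mul_mem ha hy
  have mul_mem : ∀ {b x : A}, b ∈ _root_.closure (B : Set A) → x ∈ _root_.closure I →
      b * x ∈ _root_.closure I := fun {_ x} hb hx =>
    closure_minimal (fun a ha => left_mul_mem a ha x hx)
      (isClosed_closure.preimage (continuous_mul_const x)) hb
  refine ⟨closure_mono hI.subset, subset_closure hI.zero_mem,
    fun hx hy => map_mem_closure₂ continuous_add hx hy fun _ ha _ hb => hI.add_mem ha hb,
    fun c x hx => ?_, mul_mem⟩
  rw [Algebra.smul_def]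
  exact mul_mem (subset_closure (B.algebraMap_mem c)) hx

theorem closure_of_proper_closed_left_ideal_of_dense_subalgebra_general
    {A : Type*} [Ring A] [Algebra ℂ A] [UniformSpace A] [IsTopologicalRing A]
    (A' : Subalgebra ℂ A) (hdense : Dense (A' : Set A))
    {I : Set A} (hI : IsLeftIdealIn (A' : Set A) I)
    (hclosed : IsClosed ((Subtype.val ⁻¹' I : Set A')))
    (hproper : (1 : A) ∉ I) :
    IsLeftIdealIn (Set.univ : Set A) (closure I) ∧ IsClosed (closure I) ∧
      (1 : A) ∉ closure I := by
  have hideal : IsLeftIdealIn (Set.univ : Set A) (closure I) := hdense.closure_eq ▸ hI.closure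
  have hinter : (A' : Set A) ∩ closure I ⊆ I := by
    simpa only [inter_eq_right.mpr hI.subset] using isClosed_preimage_val.mp hclosed
  exact ⟨hideal, isClosed_closure, fun h1 => hproper (hinter ⟨A'.one_mem, h1⟩)⟩

/-- Let `A` be a complete unital locally convex algebra and `A'` a dense unital
subalgebra. If `I` is a proper left ideal of `A'` which is closed in the subspace
topology of `A'`, then the closure of `I` in `A` is a proper closed left ideal of `A`. -/
theorem closure_of_proper_closed_left_ideal_of_dense_subalgebra
    {A : Type*} [Ring A] [Algebra ℂ A] [UniformSpace A] [IsUniformAddGroup A]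
    [IsTopologicalRing A] [ContinuousSMul ℂ A] [LocallyConvexSpace ℝ A] [CompleteSpace A]
    (A' : Subalgebra ℂ A) (hdense : Dense (A' : Set A))
    {I : Set A} (hI : IsLeftIdealIn (A' : Set A) I)
    (hclosed : IsClosed ((Subtype.val ⁻¹' I : Set A')))
    (hproper : (1 : A) ∉ I) :
    IsLeftIdealIn (Set.univ : Set A) (closure I) ∧ IsClosed (closure I) ∧
      (1 : A) ∉ closure I :=
  closure_of_proper_closed_left_ideal_of_dense_subalgebra_general A' hdense hI hclosed hproper
end

section
/- Let P be a compact smooth manifold, G a compact group, and (C^∞(P), G, α) a dynamical system. Then each character χ: C^∞(P)^G → ℂ extends to a character χ̃: C^∞(P) → ℂ. -/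
open scoped Manifold

section SmoothCompactOpen

variable {E : Type*} [NormedAddCommGroup E] [NormedSpace ℝ E]
  {H : Type*} [TopologicalSpace H] (I : ModelWithCorners ℝ E H)
  (P : Type*) [TopologicalSpace P] [ChartedSpace H P]
  (A : Type*) [NormedRing A] [NormedAlgebra ℝ A]

instance : ContMDiffRing 𝓘(ℝ, A) (⊤ : ℕ∞) A :=
  { instNormedSpaceLieAddGroup with
    contMDiff_mul := by
      rw [contMDiff_iff]
      refine ⟨continuous_mul, fun x y => ?_⟩
      simp only [mfld_simps, chartAt_self_eq]
      rw [contDiffOn_univ]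
      exact contDiff_mul }

/-- The smooth compact-open topology on `C^∞(P, A)`: the initial topology with respect
to all local iterated derivatives (read through the charts of `P`), each function
space of derivatives carrying the topology of uniform convergence on compact sets. -/
noncomputable instance smoothCompactOpenTopology :
    TopologicalSpace (ContMDiffMap I 𝓘(ℝ, A) P A (⊤ : ℕ∞)) :=
  ⨅ (x : P) (n : ℕ),
    TopologicalSpace.induced
      (fun f : ContMDiffMap I 𝓘(ℝ, A) P A (⊤ : ℕ∞) => fun y : (extChartAt I x).target =>
        iteratedFDerivWithin ℝ n ((f : P → A) ∘ (extChartAt I x).symm)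
          ((extChartAt I x).symm ⁻¹' Set.univ ∩ (extChartAt I x).target) (y : E))
      ((UniformOnFun.uniformSpace ((extChartAt I x).target)
          (E [×n]→L[ℝ] A) {K : Set ((extChartAt I x).target) | IsCompact K}).toTopologicalSpace)

end SmoothCompactOpen

section SmoothComplexFunctions

variable {E : Type*} [NormedAddCommGroup E] [NormedSpace ℝ E]
  {H : Type*} [TopologicalSpace H] (I : ModelWithCorners ℝ E H)
  (P : Type*) [TopologicalSpace P] [ChartedSpace H P]

/-- The ℂ-algebra structure on `C^∞(P) = C^∞(P, ℂ)`, given by the constant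
functions. -/
noncomputable instance : Algebra ℂ (ContMDiffMap I 𝓘(ℝ, ℂ) P ℂ (⊤ : ℕ∞)) :=
  RingHom.toAlgebra
    { toFun := fun c => ContMDiffMap.const c
      map_one' := rfl
      map_mul' := fun _ _ => rfl
      map_zero' := rfl
      map_add' := fun _ _ => rfl }

end SmoothComplexFunctions

/-- A dynamical system `(A, G, α)`: a group homomorphism from `G` into the
ℂ-algebra automorphisms of `A` inducing a continuous action of `G` on `A`. -/
structure DynamicalSystem (A : Type*) [Ring A] [Algebra ℂ A] [TopologicalSpace A]
    (G : Type*) [Group G] [TopologicalSpace G] where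
  α : G →* (A ≃ₐ[ℂ] A)
  continuous_act : Continuous fun p : G × A => α p.1 p.2

/-- The fixed point algebra `A^G` as a subalgebra of `A`. -/
def DynamicalSystem.fixedSubalgebra {A : Type*} [Ring A] [Algebra ℂ A]
    [TopologicalSpace A] {G : Type*} [Group G] [TopologicalSpace G]
    (D : DynamicalSystem A G) : Subalgebra ℂ A where
  carrier := {a : A | ∀ g : G, D.α g a = a}
  mul_mem' := fun ha hb g => by rw [map_mul, ha g, hb g]
  add_mem' := fun ha hb g => by rw [map_add, ha g, hb g]
  algebraMap_mem' := fun c g => (D.α g).commutes c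

/-!
Characters of `C^∞(P)` are point evaluations, so every ℂ-algebra endomorphism of `C^∞(P)` is
composition with a map of `P` and therefore commutes with complex conjugation. Hence the fixed
point algebra `B` is closed under conjugation; it is also inverse-closed in `C^∞(P)`. For such a
`B` the Gelfand argument applies: if no point represents `χ`, compactness of `P` gives finitely
many `fᵢ ∈ ker χ` without common zero, and then `∑ fᵢ * conj fᵢ = ∑ |fᵢ|²` is a unit of `B`
lying in `ker χ`.
-/

namespace ContMDiffMap

variable {E : Type*} [NormedAddCommGroup E] [NormedSpace ℝ E]
  {H : Type*} [TopologicalSpace H] {I : ModelWithCorners ℝ E H}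
  {P : Type*} [TopologicalSpace P] [ChartedSpace H P]

local notation "𝒞" => ContMDiffMap I 𝓘(ℝ, ℂ) P ℂ (⊤ : ℕ∞)

noncomputable def evalAlgHom (p : P) : 𝒞 →ₐ[ℂ] ℂ :=
  { evalRingHom p with commutes' := fun _ => rfl }

noncomputable def conj (f : 𝒞) : 𝒞 :=
  ⟨fun p => starRingEnd ℂ (f p), Complex.conjCLE.contDiff.comp_contMDiff f.contMDiff⟩

theorem isUnit_of_forall_ne_zero {f : 𝒞} (hf : ∀ p, f p ≠ 0) : IsUnit f :=
  ⟨⟨f, ⟨fun p => (f p)⁻¹, fun p => (contDiffAt_inv ℝ (hf p)).comp_contMDiffAt (f.contMDiff p)⟩,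
    ext fun p => mul_inv_cancel₀ (hf p), ext fun p => inv_mul_cancel₀ (hf p)⟩, rfl⟩

theorem exists_mem_ideal_forall_ne_zero [CompactSpace P] {B : Subalgebra ℂ 𝒞}
    (hconj : ∀ f ∈ B, conj f ∈ B) (J : Ideal B) (hJ : ∀ p, ∃ f ∈ J, (f : 𝒞) p ≠ 0) :
    ∃ g ∈ J, ∀ q, (g : 𝒞) q ≠ 0 := by
  choose f hfJ hfp using hJ
  let absSq : P → B := fun p => f p * ⟨conj (f p), hconj _ (f p).2⟩
  have absSq_apply : ∀ p q, (absSq p : 𝒞) q = Complex.normSq ((f p : 𝒞) q) :=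
    fun p q => Complex.mul_conj _
  obtain ⟨s, hs⟩ := isCompact_univ.elim_finite_subcover (fun p => {q | (f p : 𝒞) q ≠ 0})
    (fun p => isOpen_ne.preimage (f p : 𝒞).contMDiff.continuous)
    fun q _ => Set.mem_iUnion.2 ⟨q, hfp q⟩
  refine ⟨∑ p ∈ s, absSq p, J.sum_mem fun p _ => J.mul_mem_right _ (hfJ p), fun q => ?_⟩
  have sum_apply :
      ((∑ p ∈ s, absSq p : B) : 𝒞) q = ((∑ p ∈ s, Complex.normSq ((f p : 𝒞) q) : ℝ) : ℂ) :=
    calc ((∑ p ∈ s, absSq p : B) : 𝒞) q = ∑ p ∈ s, (absSq p : 𝒞) q :=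
          map_sum ((evalRingHom q).comp B.val.toRingHom) absSq s
      _ = _ := by push_cast; exact Finset.sum_congr rfl fun p _ => absSq_apply p q
  obtain ⟨p₀, hp₀, hp₀q⟩ := Set.mem_iUnion₂.1 (hs (Set.mem_univ q))
  rw [sum_apply, Complex.ofReal_ne_zero]
  apply ne_of_gt
  exact Finset.sum_pos' (fun _ _ => Complex.normSq_nonneg _) ⟨p₀, hp₀, Complex.normSq_pos.2 hp₀q⟩

theorem exists_forall_eq_apply_of_conj_mem [CompactSpace P] {B : Subalgebra ℂ 𝒞}
    (hconj : ∀ f ∈ B, conj f ∈ B) (hunit : ∀ b : B, IsUnit (b : 𝒞) → IsUnit b)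
    (φ : B →ₐ[ℂ] ℂ) : ∃ p, ∀ b : B, φ b = (b : 𝒞) p := by
  by_contra! hφ
  choose b hb using hφ
  obtain ⟨g, hg, hg0⟩ := exists_mem_ideal_forall_ne_zero hconj (RingHom.ker φ) fun p =>
    ⟨b p - algebraMap ℂ B (φ (b p)), by simp, sub_ne_zero.2 (hb p).symm⟩
  have := (hunit g (isUnit_of_forall_ne_zero hg0)).map φ
  rw [RingHom.mem_ker.1 hg] at this
  exact not_isUnit_zero this

theorem exists_forall_eq_apply [CompactSpace P] (φ : 𝒞 →ₐ[ℂ] ℂ) : ∃ p, ∀ f : 𝒞, φ f = f p := by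
  obtain ⟨p, hp⟩ := exists_forall_eq_apply_of_conj_mem (B := ⊤) (fun _ _ => trivial)
    (fun _ hb => hb.map (Subalgebra.topEquiv (R := ℂ) (A := 𝒞)).symm)
    (φ.comp (⊤ : Subalgebra ℂ 𝒞).val)
  exact ⟨p, fun f => hp ⟨f, trivial⟩⟩

theorem map_conj [CompactSpace P] (σ : 𝒞 →ₐ[ℂ] 𝒞) (f : 𝒞) : σ (conj f) = conj (σ f) := by
  ext p
  obtain ⟨q, hq⟩ := exists_forall_eq_apply ((evalAlgHom p).comp σ)
  exact (hq (conj f)).trans (congrArg (starRingEnd ℂ) (hq f).symm)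

end ContMDiffMap

namespace DynamicalSystem

theorem isUnit_of_isUnit_coe {A : Type*} [Ring A] [Algebra ℂ A] [TopologicalSpace A]
    {G : Type*} [Group G] [TopologicalSpace G] (D : DynamicalSystem A G)
    {b : D.fixedSubalgebra} (hb : IsUnit (b : A)) : IsUnit b := by
  obtain ⟨u, hu⟩ := hb
  have hinv : (↑u⁻¹ : A) ∈ D.fixedSubalgebra := fun g =>
    left_inv_eq_right_inv (a := (u : A))
      (by rw [hu, ← b.2 g, ← map_mul, ← hu, Units.inv_mul, map_one]) u.mul_inv
  exact ⟨⟨b, ⟨_, hinv⟩, Subtype.ext (hu ▸ u.mul_inv : (b : A) * ↑u⁻¹ = 1),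
    Subtype.ext (hu ▸ u.inv_mul : ↑u⁻¹ * (b : A) = 1)⟩, rfl⟩

end DynamicalSystem

theorem character_of_smooth_fixedSubalgebra_extends_general
    {E : Type*} [NormedAddCommGroup E] [NormedSpace ℝ E]
    {H : Type*} [TopologicalSpace H] (I : ModelWithCorners ℝ E H)
    (P : Type*) [TopologicalSpace P] [ChartedSpace H P]
    [CompactSpace P]
    {G : Type*} [Group G] [TopologicalSpace G]
    (D : DynamicalSystem (ContMDiffMap I 𝓘(ℝ, ℂ) P ℂ (⊤ : ℕ∞)) G)
    (χ : D.fixedSubalgebra →ₐ[ℂ] ℂ) :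
    ∃ χext : ContMDiffMap I 𝓘(ℝ, ℂ) P ℂ (⊤ : ℕ∞) →ₐ[ℂ] ℂ,
      ∀ b : D.fixedSubalgebra, χext (b : ContMDiffMap I 𝓘(ℝ, ℂ) P ℂ (⊤ : ℕ∞)) = χ b := by
  have hconj : ∀ f ∈ D.fixedSubalgebra, ContMDiffMap.conj f ∈ D.fixedSubalgebra :=
    fun f hf g => (ContMDiffMap.map_conj (D.α g).toAlgHom f).trans (congrArg _ (hf g))
  obtain ⟨p, hp⟩ := ContMDiffMap.exists_forall_eq_apply_of_conj_mem hconj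
    (fun _ => D.isUnit_of_isUnit_coe) χ
  exact ⟨ContMDiffMap.evalAlgHom p, fun b => (hp b).symm⟩

/-- Let `P` be a compact smooth manifold, `G` a compact group and `(C^∞(P), G, α)` a
dynamical system. Then each character `χ : C^∞(P)^G → ℂ` extends to a character
`χ̃ : C^∞(P) → ℂ`. -/
theorem character_of_smooth_fixedSubalgebra_extends
    {E : Type*} [NormedAddCommGroup E] [NormedSpace ℝ E]
    {H : Type*} [TopologicalSpace H] (I : ModelWithCorners ℝ E H)
    (P : Type*) [TopologicalSpace P] [ChartedSpace H P]
    [IsManifold I (⊤ : ℕ∞) P] [CompactSpace P]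
    {G : Type*} [Group G] [TopologicalSpace G] [IsTopologicalGroup G] [CompactSpace G]
    (D : DynamicalSystem (ContMDiffMap I 𝓘(ℝ, ℂ) P ℂ (⊤ : ℕ∞)) G)
    (χ : D.fixedSubalgebra →ₐ[ℂ] ℂ) :
    ∃ χext : ContMDiffMap I 𝓘(ℝ, ℂ) P ℂ (⊤ : ℕ∞) →ₐ[ℂ] ℂ,
      ∀ b : D.fixedSubalgebra, χext (b : ContMDiffMap I 𝓘(ℝ, ℂ) P ℂ (⊤ : ℕ∞)) = χ b :=
  character_of_smooth_fixedSubalgebra_extends_general I P D χ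
end

section
/- Let A be a complex continuous inverse algebra. Then for every character χ ∈ Γ_A and every a ∈ A, χ(a) lies in the spectrum σ(a) of a; consequently the Gelfand spectrum Γ_A is a compact Hausdorff space. -/
/-!
A character `χ` sends `λ - a` to `λ - χ a`, so it cannot send a unit to `0`: hence `χ a ∈ σ(a)`.
Since the units of a CIA form an open set, each `σ(a)` is closed, and it is bounded because
`1 - μ a` stays invertible for small `μ`; so `σ(a)` is compact. Being an algebra homomorphism is a
closed condition under pointwise convergence, so `Γ_A` is a closed subset of the compact Hausdorff
product `∏ₐ σ(a)`.
-/

/-- A continuous inverse algebra (CIA): a unital (locally convex) topological algebra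
whose group of units is open and whose inversion is continuous at `1`. -/
def IsCIA (A : Type*) [Ring A] [TopologicalSpace A] : Prop :=
  IsOpen {a : A | IsUnit a} ∧ ContinuousAt (Ring.inverse : A → A) 1

/-- The Gelfand spectrum of a complex algebra `A`: the set of (nonzero) algebra
homomorphisms `A → ℂ`, viewed inside `A → ℂ` with the topology of pointwise
convergence. -/
def GelfandSpectrum (A : Type*) [Ring A] [Algebra ℂ A] : Set (A → ℂ) :=
  {f : A → ℂ | ∃ χ : A →ₐ[ℂ] ℂ, f = ⇑χ}

open Metric

namespace spectrum

variable {𝕜 A : Type*} [Ring A] [TopologicalSpace A] [ContinuousSub A]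

theorem isClosed_of_isOpen_units [CommSemiring 𝕜] [TopologicalSpace 𝕜] [Algebra 𝕜 A]
    [ContinuousSMul 𝕜 A] (hA : IsOpen {x : A | IsUnit x}) (a : A) : IsClosed (spectrum 𝕜 a) :=
  (hA.preimage ((continuous_algebraMap 𝕜 A).sub continuous_const)).isClosed_compl

variable [NormedField 𝕜] [Algebra 𝕜 A] [ContinuousSMul 𝕜 A]

theorem isBounded_of_isOpen_units (hA : IsOpen {x : A | IsUnit x}) (a : A) :
    Bornology.IsBounded (spectrum 𝕜 a) := by
  have hopen : IsOpen {μ : 𝕜 | IsUnit (1 - μ • a)} :=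
    hA.preimage (continuous_const.sub (continuous_id.smul continuous_const))
  obtain ⟨ε, hε, hball⟩ := isOpen_iff.mp hopen 0 (by simp)
  refine (isBounded_closedBall (x := (0 : 𝕜)) (r := ε⁻¹)).subset fun k hk => ?_
  by_contra hkε
  rw [mem_closedBall_zero_iff, not_le] at hkε
  have hk0 : k ≠ 0 := norm_pos_iff.mp ((inv_pos.mpr hε).trans hkε)
  have hunit : IsUnit (1 - k⁻¹ • a) :=
    hball (by simpa [norm_inv] using inv_lt_of_inv_lt₀ hε hkε)
  have hfactor : algebraMap 𝕜 A k - a = algebraMap 𝕜 A k * (1 - k⁻¹ • a) := by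
    rw [mul_sub, mul_one, ← Algebra.smul_def, smul_smul, mul_inv_cancel₀ hk0, one_smul]
  exact hk (by rw [mem_resolventSet_iff, hfactor]; exact ((IsUnit.mk0 k hk0).map _).mul hunit)

theorem isCompact_of_isOpen_units [ProperSpace 𝕜] (hA : IsOpen {x : A | IsUnit x}) (a : A) :
    IsCompact (spectrum 𝕜 a) :=
  isCompact_of_isClosed_isBounded (isClosed_of_isOpen_units hA a) (isBounded_of_isOpen_units hA a)

end spectrum

theorem AlgHom.isClosed_range_coe (R A B : Type*) [CommSemiring R] [Semiring A] [Algebra R A]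
    [Semiring B] [Algebra R B] [TopologicalSpace B] [T2Space B] [ContinuousAdd B]
    [ContinuousMul B] [ContinuousConstSMul R B] :
    IsClosed (Set.range ((↑) : (A →ₐ[R] B) → A → B)) := by
  have hrange : Set.range ((↑) : (A →ₐ[R] B) → A → B) =
      Set.range ((↑) : (A →* B) → A → B) ∩ Set.range ((↑) : (A →ₗ[R] B) → A → B) := by
    refine Set.Subset.antisymm ?_ ?_
    · rintro _ ⟨φ, rfl⟩
      exact ⟨⟨φ.toMonoidHom, rfl⟩, φ.toLinearMap, rfl⟩
    · rintro _ ⟨⟨m, rfl⟩, l, hl⟩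
      exact ⟨AlgHom.ofLinearMap l (hl ▸ map_one m) (hl ▸ map_mul m), hl⟩
  rw [hrange]
  exact (MonoidHom.isClosed_range_coe A B).inter (LinearMap.isClosed_range_coe A B _)

theorem gelfandSpectrum_compact_hausdorff_general
    (A : Type*) [Ring A] [Algebra ℂ A] [TopologicalSpace A] [IsTopologicalRing A]
    [ContinuousSMul ℂ A]
    (hA : IsCIA A) :
    (∀ (χ : A →ₐ[ℂ] ℂ) (a : A), χ a ∈ spectrum ℂ a) ∧
      CompactSpace (GelfandSpectrum A) ∧ T2Space (GelfandSpectrum A) := by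
  refine ⟨AlgHom.apply_mem_spectrum, ?_, inferInstance⟩
  have hpi : GelfandSpectrum A ⊆ Set.univ.pi fun a => spectrum ℂ a := by
    rintro _ ⟨χ, rfl⟩ a -
    exact AlgHom.apply_mem_spectrum χ a
  have hclosed : IsClosed (GelfandSpectrum A) := by
    convert AlgHom.isClosed_range_coe ℂ A ℂ using 1
    ext f
    exact exists_congr fun χ => eq_comm
  rw [← isCompact_iff_compactSpace]
  exact (isCompact_univ_pi fun a => spectrum.isCompact_of_isOpen_units hA.1 a).of_isClosed_subset
    hclosed hpi

/-- In a complex CIA, every character takes each `a` into its spectrum `σ(a)`;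
consequently the Gelfand spectrum is a compact Hausdorff space. -/
theorem gelfandSpectrum_compact_hausdorff
    (A : Type*) [Ring A] [Algebra ℂ A] [TopologicalSpace A] [IsTopologicalRing A]
    [ContinuousSMul ℂ A] [LocallyConvexSpace ℝ A]
    (hA : IsCIA A) :
    (∀ (χ : A →ₐ[ℂ] ℂ) (a : A), χ a ∈ spectrum ℂ a) ∧
      CompactSpace (GelfandSpectrum A) ∧ T2Space (GelfandSpectrum A) :=
  gelfandSpectrum_compact_hausdorff_general A hA
end

section
/- Let A be a continuous inverse algebra and I ⊆ A a proper closed two-sided ideal. Then the quotient algebra A/I, equipped with the quotient topology, is a continuous inverse algebra. -/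
/-- The quotient topology on the quotient of a ring by a ring congruence. -/
instance {A : Type*} [Ring A] [TopologicalSpace A] (c : RingCon A) :
    TopologicalSpace c.Quotient :=
  inferInstanceAs (TopologicalSpace (Quotient c.toSetoid))

open Filter Topology

theorem Ring.inverse_map_of_isUnit {M₀ N₀ F : Type*} [MonoidWithZero M₀] [MonoidWithZero N₀]
    [FunLike F M₀ N₀] [MonoidHomClass F M₀ N₀] (f : F) {a : M₀} (ha : IsUnit a) :
    Ring.inverse (f a) = f (Ring.inverse a) := by
  obtain ⟨u, rfl⟩ := ha
  rw [show f u = (Units.map (f : M₀ →* N₀) u : N₀) from rfl, Ring.inverse_unit, Ring.inverse_unit]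
  rfl

theorem isOpen_setOf_isUnit_of_mem_nhds_one {M : Type*} [Monoid M] [TopologicalSpace M]
    [ContinuousMul M] (h : {x : M | IsUnit x} ∈ 𝓝 1) : IsOpen {x : M | IsUnit x} := by
  refine isOpen_iff_mem_nhds.2 fun u (hu : IsUnit u) => ?_
  have hmul : Tendsto (fun x : M => x * ↑hu.unit⁻¹) (𝓝 u) (𝓝 1) := by
    simpa using (continuous_mul_const (↑hu.unit⁻¹ : M)).tendsto u
  exact mem_of_superset (hmul h) fun x hx => Units.isUnit_mul_units x _ |>.1 hx

theorem IsCIA.of_isOpenQuotientMap {A B : Type*} [Ring A] [TopologicalSpace A] [Ring B]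
    [TopologicalSpace B] [ContinuousMul B] (hA : IsCIA A) (f : A →+* B)
    (hf : IsOpenQuotientMap f) : IsCIA B := by
  have hnhds : 𝓝 (1 : B) = map f (𝓝 1) := by rw [hf.map_nhds_eq, map_one]
  have hunits : ∀ᶠ a in 𝓝 (1 : A), IsUnit a := hA.1.mem_nhds isUnit_one
  refine ⟨isOpen_setOf_isUnit_of_mem_nhds_one ?_, ?_⟩
  · rw [hnhds]
    exact mem_map.2 (mem_of_superset hunits fun a ha => ha.map f)
  · rw [← map_one f, ← hf.continuousAt_comp_iff]
    refine (hf.continuous.continuousAt.comp hA.2).congr ?_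
    filter_upwards [hunits] with a ha
    exact (Ring.inverse_map_of_isUnit f ha).symm

namespace TwoSidedIdeal

variable {A : Type*} [Ring A] (I : TwoSidedIdeal A)

theorem ringCon_toSetoid_eq_orbitRel :
    I.ringCon.toSetoid = AddAction.orbitRel (AddSubgroup.ofClass I) A := by
  ext a b
  rw [AddAction.orbitRel_apply, AddAction.mem_orbit_iff]
  refine ⟨fun h => ⟨⟨a - b, (I.rel_iff a b).1 h⟩, sub_add_cancel a b⟩, ?_⟩
  rintro ⟨⟨x, hx⟩, rfl⟩
  show I.ringCon (x + b) b
  rwa [rel_iff, add_sub_cancel_right]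

theorem isOpenQuotientMap_ringCon_mk' [TopologicalSpace A] [ContinuousAdd A] :
    IsOpenQuotientMap (I.ringCon.mk' : A → I.ringCon.Quotient) := by
  change IsOpenQuotientMap (Quotient.mk I.ringCon.toSetoid)
  rw [I.ringCon_toSetoid_eq_orbitRel]
  exact AddAction.isOpenQuotientMap_quotientMk

instance [TopologicalSpace A] [ContinuousAdd A] [ContinuousMul A] : ContinuousMul I.ringCon.Quotient where
  continuous_mul := by
    have hq := I.isOpenQuotientMap_ringCon_mk'
    rw [← (hq.prodMap hq).continuous_comp_iff]
    exact hq.continuous.comp continuous_mul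

end TwoSidedIdeal

theorem isCIA_quotient_general
    {A : Type*} [Ring A] [TopologicalSpace A] [IsTopologicalRing A]
    (hA : IsCIA A) (I : TwoSidedIdeal A) :
    IsCIA I.ringCon.Quotient :=
  hA.of_isOpenQuotientMap _ I.isOpenQuotientMap_ringCon_mk'

/-- Let `A` be a continuous inverse algebra and `I ⊆ A` a proper closed two-sided
ideal. Then the quotient algebra `A/I`, equipped with the quotient topology, is a
continuous inverse algebra. -/
theorem isCIA_quotient
    {A : Type*} [Ring A] [Algebra ℂ A] [TopologicalSpace A] [IsTopologicalRing A]
    [ContinuousSMul ℂ A] [LocallyConvexSpace ℝ A]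
    (hA : IsCIA A) (I : TwoSidedIdeal A)
    (hclosed : IsClosed (I : Set A)) (hproper : (1 : A) ∉ I) :
    IsCIA I.ringCon.Quotient :=
  isCIA_quotient_general hA I
end

section
/- If A is a continuous inverse algebra, then every character (algebra homomorphism) χ: A → 𝕂 is continuous. -/
theorem AlgHom.continuous_of_isOpen_setOf_isUnit {𝕜 A : Type*} [NontriviallyNormedField 𝕜]
    [Ring A] [Algebra 𝕜 A] [TopologicalSpace A] [IsTopologicalAddGroup A] [ContinuousSMul 𝕜 A]
    (hunits : IsOpen {a : A | IsUnit a}) (χ : A →ₐ[𝕜] 𝕜) : Continuous χ :=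
  χ.toLinearMap.continuous_of_nonzero_on_open _ hunits ⟨1, isUnit_one⟩
    fun _ ha => (ha.map χ).ne_zero

theorem character_of_CIA_continuous_general
    {𝕜 : Type*} [RCLike 𝕜] {A : Type*} [Ring A] [Algebra 𝕜 A]
    [TopologicalSpace A] [IsTopologicalRing A] [ContinuousSMul 𝕜 A]
    (hA : IsCIA A) (χ : A →ₐ[𝕜] 𝕜) :
    Continuous χ :=
  χ.continuous_of_isOpen_setOf_isUnit hA.1

/-- If `A` is a CIA over `𝕜 ∈ {ℝ, ℂ}`, then each character `χ : A → 𝕜` is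
continuous. -/
theorem character_of_CIA_continuous
    {𝕜 : Type*} [RCLike 𝕜] {A : Type*} [Ring A] [Algebra 𝕜 A]
    [TopologicalSpace A] [IsTopologicalRing A] [ContinuousSMul 𝕜 A]
    [Module ℝ A] [IsScalarTower ℝ 𝕜 A] [LocallyConvexSpace ℝ A]
    (hA : IsCIA A) (χ : A →ₐ[𝕜] 𝕜) :
    Continuous χ :=
  character_of_CIA_continuous_general hA χ
end

section
/- Let A be a complex continuous inverse algebra and a ∈ A with spectral radius r_A(a) < 1. Then the Neumann series ∑_{n=0}^∞ aⁿ converges in A (provided A is complete) and its sum equals (1_A − a)^{-1}; in particular 1_A − a is invertible. -/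
open Filter Metric Set Topology
open scoped ComplexOrder

theorem Ring.inverse_units_mul {M₀ : Type*} [MonoidWithZero M₀] (u : M₀ˣ) (y : M₀) :
    Ring.inverse (u * y) = Ring.inverse y * ↑u⁻¹ := by
  by_cases hy : IsUnit y
  · obtain ⟨v, rfl⟩ := hy
    rw [← Units.val_mul, Ring.inverse_unit, Ring.inverse_unit, mul_inv_rev, Units.val_mul]
  · rw [Ring.inverse_non_unit y hy, Ring.inverse_non_unit _ (mt (u.isUnit_units_mul y).mp hy),
      zero_mul]

theorem continuousAt_ringInverse_of_isUnit {R : Type*} [Ring R] [TopologicalSpace R]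
    [IsTopologicalRing R] (h : ContinuousAt (Ring.inverse : R → R) 1) {x : R} (hx : IsUnit x) :
    ContinuousAt Ring.inverse x := by
  obtain ⟨u, rfl⟩ := hx
  have hmul : ContinuousAt (fun y : R => ↑u⁻¹ * y) ↑u := (continuous_const_mul _).continuousAt
  have h1 : ContinuousAt Ring.inverse ((↑u⁻¹ : R) * ↑u) := by rwa [Units.inv_mul]
  convert (h1.comp hmul).mul_const (↑u⁻¹ : R) using 1
  ext y
  simp [← Ring.inverse_units_mul]

-- Under `ComplexOrder` the nonnegative scalars of `𝕜` are the nonnegative reals, so `𝕜`-convexity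
-- and `ℝ`-convexity coincide.
theorem LocallyConvexSpace.of_real (𝕜 E : Type*) [RCLike 𝕜] [AddCommGroup E] [Module 𝕜 E]
    [Module ℝ E] [IsScalarTower ℝ 𝕜 E] [TopologicalSpace E] [LocallyConvexSpace ℝ E] :
    LocallyConvexSpace 𝕜 E := by
  rw [locallyConvexSpace_iff]
  refine fun x => (LocallyConvexSpace.convex_basis (𝕜 := ℝ) x).congr
    (fun s => and_congr_right fun _ =>
      ⟨convex_of_nonneg_surjective_algebraMap _ fun _ => RCLike.nonneg_iff_exists_ofReal.mp,
        Convex.lift ℝ⟩) fun _ _ => rfl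

theorem circleIntegral_inv_pow_mul_eq_of_eq_add_mul {g : ℕ → ℂ → ℂ} {s : ℝ} (hs : 0 < s)
    (hg : ∀ j, DiffContOnCl ℂ (g j) (ball 0 s))
    (hrec : ∀ j, ∀ z ∈ sphere (0 : ℂ) s, g j z = g j 0 + z * g (j + 1) z) (m j : ℕ) :
    (∮ z in C(0, s), (z ^ (m + 1))⁻¹ * g j z) = (2 * Real.pi * Complex.I) * g (j + m) 0 := by
  induction m generalizing j with
  | zero =>
    simpa using (hg j).circleIntegral_sub_inv_smul (mem_ball_self hs)
  | succ m ih =>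
    have hz : ∀ z ∈ sphere (0 : ℂ) s, z ≠ 0 := fun z hz => ne_zero_of_mem_sphere hs.ne' ⟨z, hz⟩
    have hinv : ∀ k : ℕ, ContinuousOn (fun z : ℂ => (z ^ k)⁻¹) (sphere 0 s) := fun k =>
      (continuousOn_pow k).inv₀ fun z hzs => pow_ne_zero k (hz z hzs)
    have hsplit : EqOn (fun z => (z ^ (m + 1 + 1))⁻¹ * g j z)
        (fun z => g j 0 * (z ^ (m + 2))⁻¹ + (z ^ (m + 1))⁻¹ * g (j + 1) z) (sphere 0 s) := by
      intro z hzs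
      dsimp only
      rw [hrec j z hzs]
      field_simp [hz z hzs]
      ring
    have hvanish : (∮ z in C(0, s), (z ^ (m + 2))⁻¹) = 0 := by
      have hpow (z : ℂ) : (z - 0) ^ (-(m + 2 : ℤ)) = (z ^ (m + 2))⁻¹ := by
        rw [sub_zero, zpow_neg, ← zpow_natCast]
        push_cast
        rfl
      simpa only [hpow] using
        circleIntegral.integral_sub_zpow_of_ne (n := -(m + 2 : ℤ)) (by omega) 0 0 s
    have hint₁ : CircleIntegrable (fun z => g j 0 * (z ^ (m + 2))⁻¹) 0 s :=
      (continuousOn_const.mul (hinv _)).circleIntegrable hs.le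
    have hint₂ : CircleIntegrable (fun z => (z ^ (m + 1))⁻¹ * g (j + 1) z) 0 s := by
      refine ((hinv _).mul ((hg _).continuousOn.mono ?_)).circleIntegrable hs.le
      rw [closure_ball _ hs.ne']
      exact sphere_subset_closedBall
    rw [circleIntegral.integral_congr hs.le hsplit, circleIntegral.integral_add hint₁ hint₂,
      circleIntegral.integral_const_mul, hvanish, mul_zero, zero_add, ih, add_right_comm,
      add_assoc]

theorem norm_le_div_pow_of_eq_add_mul {g : ℕ → ℂ → ℂ} {s M : ℝ} (hs : 0 < s)
    (hg : ∀ j, DiffContOnCl ℂ (g j) (ball 0 s))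
    (hrec : ∀ j, ∀ z ∈ sphere (0 : ℂ) s, g j z = g j 0 + z * g (j + 1) z)
    (hM : ∀ z ∈ sphere (0 : ℂ) s, ‖g 0 z‖ ≤ M) (n : ℕ) : ‖g n 0‖ ≤ M / s ^ n := by
  have hbound : ‖∮ z in C(0, s), (z ^ (n + 1))⁻¹ * g 0 z‖ ≤
      2 * Real.pi * s * ((s ^ (n + 1))⁻¹ * M) :=
    circleIntegral.norm_integral_le_of_norm_le_const hs.le fun z hz => by
      rw [norm_mul, norm_inv, norm_pow, mem_sphere_zero_iff_norm.1 hz]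
      exact mul_le_mul_of_nonneg_left (hM z hz) (by positivity)
  have h2pi : ‖(2 * Real.pi * Complex.I : ℂ)‖ = 2 * Real.pi := by
    simp [Real.pi_pos.le]
  rw [circleIntegral_inv_pow_mul_eq_of_eq_add_mul hs hg hrec n 0, zero_add, norm_mul, h2pi]
    at hbound
  have hrhs : 2 * Real.pi * s * ((s ^ (n + 1))⁻¹ * M) = 2 * Real.pi * (M / s ^ n) := by
    field_simp
    ring
  rw [hrhs] at hbound
  exact le_of_mul_le_mul_left hbound Real.two_pi_pos

theorem Seminorm.exists_strongDual_apply_eq {𝕜 E : Type*} [RCLike 𝕜] [AddCommGroup E]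
    [Module 𝕜 E] [TopologicalSpace E] [PolynormableSpace 𝕜 E] {p : Seminorm 𝕜 E}
    (hp : Continuous p) (x : E) : ∃ ψ : StrongDual 𝕜 E, ψ x = p x ∧ ∀ y, ‖ψ y‖ ≤ p y := by
  rcases eq_or_ne x 0 with rfl | hx
  · exact ⟨0, by simp, fun y => by simp⟩
  let f : Module.Dual 𝕜 (𝕜 ∙ x) := (p x : 𝕜) • (LinearEquiv.coord 𝕜 E x hx).toLinearMap
  have hf : ∀ y, ‖f y‖ ≤ p y := fun y => by
    rw [← LinearEquiv.coord_apply_smul 𝕜 E x hx y, map_smul_eq_mul]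
    simp [f, norm_smul, abs_of_nonneg (apply_nonneg p x), mul_comm]
  obtain ⟨ψ, hψf, hψp⟩ := Module.Dual.exists_continuous_extension_of_le_seminorm _ f hp hf
  refine ⟨ψ, ?_, hψp⟩
  have := hψf ⟨x, Submodule.mem_span_singleton_self x⟩
  simp only [f, LinearMap.smul_apply, LinearEquiv.coe_coe, LinearEquiv.coord_self] at this
  simpa using this

section OneSubSmul

variable {𝕜 A : Type*} [CommRing 𝕜] [Ring A] [Algebra 𝕜 A] (a : A)

theorem ringInverse_one_sub_smul_sub {z w : 𝕜} (hz : IsUnit (1 - z • a))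
    (hw : IsUnit (1 - w • a)) :
    Ring.inverse (1 - w • a) - Ring.inverse (1 - z • a) =
      (w - z) • (Ring.inverse (1 - w • a) * a * Ring.inverse (1 - z • a)) := by
  calc Ring.inverse (1 - w • a) - Ring.inverse (1 - z • a)
      = Ring.inverse (1 - w • a) * ((1 - z • a) - (1 - w • a)) * Ring.inverse (1 - z • a) := by
        rw [mul_sub, sub_mul, Ring.inverse_mul_cancel _ hw, one_mul, mul_assoc,
          Ring.mul_inverse_cancel _ hz, mul_one]
    _ = _ := by
        rw [sub_sub_sub_cancel_left, ← sub_smul, mul_smul_comm, smul_mul_assoc]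

theorem ringInverse_one_sub_smul_eq {z : 𝕜} (hz : IsUnit (1 - z • a)) :
    Ring.inverse (1 - z • a) = 1 + z • (a * Ring.inverse (1 - z • a)) := by
  have h := Ring.mul_inverse_cancel _ hz
  rw [sub_mul, one_mul, smul_mul_assoc] at h
  exact sub_eq_iff_eq_add.mp h

end OneSubSmul

theorem isUnit_one_sub_smul_of_norm_mul_lt_one {𝕜 A : Type*} [NormedField 𝕜] [Ring A]
    [Algebra 𝕜 A] {a : A} {r : ℝ} (hr : ∀ μ ∈ spectrum 𝕜 a, ‖μ‖ ≤ r) {z : 𝕜}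
    (hz : ‖z‖ * r < 1) : IsUnit (1 - z • a) := by
  rcases eq_or_ne z 0 with rfl | hz₀
  · simp
  have hmem : z⁻¹ ∉ spectrum 𝕜 a := fun hmem => by
    have := mul_le_mul_of_nonneg_left (hr _ hmem) (norm_nonneg z)
    rw [norm_inv, mul_inv_cancel₀ (norm_ne_zero_iff.2 hz₀)] at this
    linarith
  rw [spectrum.notMem_iff, Algebra.algebraMap_eq_smul_one] at hmem
  simpa [Units.smul_def] using
    (IsUnit.smul_sub_iff_sub_inv_smul (Units.mk0 z⁻¹ (inv_ne_zero hz₀)) a).1 hmem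

theorem exists_one_lt_forall_mem_closedBall_isUnit_one_sub_smul {𝕜 A : Type*} [NormedField 𝕜]
    [Ring A] [Algebra 𝕜 A] {a : A} {r : ℝ} (hr₁ : r < 1) (hr : ∀ μ ∈ spectrum 𝕜 a, ‖μ‖ ≤ r) :
    ∃ s : ℝ, 1 < s ∧ ∀ z ∈ closedBall (0 : 𝕜) s, IsUnit (1 - z • a) := by
  obtain ⟨t, hrt, ht₁⟩ := exists_between (max_lt hr₁ zero_lt_one)
  have ht₀ : 0 < t := (le_max_right r 0).trans_lt hrt
  refine ⟨t⁻¹, one_lt_inv_iff₀.2 ⟨ht₀, ht₁⟩, fun z hz =>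
    isUnit_one_sub_smul_of_norm_mul_lt_one hr ?_⟩
  calc ‖z‖ * r ≤ ‖z‖ * max r 0 := mul_le_mul_of_nonneg_left (le_max_left _ _) (norm_nonneg z)
    _ ≤ t⁻¹ * max r 0 := mul_le_mul_of_nonneg_right (by simpa using hz) (le_max_right _ _)
    _ < t⁻¹ * t := by gcongr
    _ = 1 := inv_mul_cancel₀ ht₀.ne'

section Resolvent

variable {𝕜 A : Type*} [NontriviallyNormedField 𝕜] [Ring A] [Algebra 𝕜 A] [TopologicalSpace A]
  [IsTopologicalRing A] [ContinuousSMul 𝕜 A] {a : A}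

theorem continuousAt_ringInverse_one_sub_smul (hinv : ContinuousAt (Ring.inverse : A → A) 1)
    {z : 𝕜} (hz : IsUnit (1 - z • a)) :
    ContinuousAt (fun w : 𝕜 => Ring.inverse (1 - w • a)) z :=
  (continuousAt_ringInverse_of_isUnit hinv hz).comp (f := fun w : 𝕜 => 1 - w • a) (by fun_prop)

theorem hasDerivAt_mul_ringInverse_one_sub_smul {F : Type*} [NormedAddCommGroup F]
    [NormedSpace 𝕜 F] (hinv : ContinuousAt (Ring.inverse : A → A) 1) (ψ : A →L[𝕜] F) (b : A)
    {z : 𝕜} (hunit : ∀ᶠ w in 𝓝 z, IsUnit (1 - w • a)) :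
    HasDerivAt (fun w => ψ (b * Ring.inverse (1 - w • a)))
      (ψ (b * (Ring.inverse (1 - z • a) * a * Ring.inverse (1 - z • a)))) z := by
  have hz := hunit.self_of_nhds
  have hlim : Tendsto (fun w => ψ (b * (Ring.inverse (1 - w • a) * a * Ring.inverse (1 - z • a))))
      (𝓝[≠] z) (𝓝 (ψ (b * (Ring.inverse (1 - z • a) * a * Ring.inverse (1 - z • a))))) :=
    (ψ.continuous.continuousAt.comp ((((continuousAt_ringInverse_one_sub_smul hinv hz).mul_const
      a).mul_const _).const_mul b)).tendsto.mono_left nhdsWithin_le_nhds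
  rw [hasDerivAt_iff_tendsto_slope]
  refine hlim.congr' ?_
  filter_upwards [nhdsWithin_le_nhds hunit, self_mem_nhdsWithin] with w hw hwz
  rw [slope_def_module, ← map_sub, ← mul_sub, ringInverse_one_sub_smul_sub a hz hw, mul_smul_comm,
    map_smul, inv_smul_smul₀ (sub_ne_zero.2 hwz)]

theorem diffContOnCl_mul_ringInverse_one_sub_smul {F : Type*} [NormedAddCommGroup F]
    [NormedSpace 𝕜 F] (hinv : ContinuousAt (Ring.inverse : A → A) 1) (ψ : A →L[𝕜] F) (b : A)
    {U : Set 𝕜} (hU : IsOpen U) (hunit : ∀ z ∈ closure U, IsUnit (1 - z • a)) :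
    DiffContOnCl 𝕜 (fun w => ψ (b * Ring.inverse (1 - w • a))) U where
  differentiableOn _ hz := (hasDerivAt_mul_ringInverse_one_sub_smul hinv ψ b
    (mem_of_superset (hU.mem_nhds hz) fun w hw => hunit w (subset_closure hw))).differentiableAt
      |>.differentiableWithinAt
  continuousOn z hz := (ψ.continuous.continuousAt.comp
    ((continuousAt_ringInverse_one_sub_smul hinv (hunit z hz)).const_mul b)).continuousWithinAt

end Resolvent

section Complex

variable {A : Type*} [Ring A] [Algebra ℂ A] [TopologicalSpace A] [IsTopologicalRing A]
  [ContinuousSMul ℂ A] [PolynormableSpace ℂ A] {a : A}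

theorem exists_seminorm_pow_le_div_pow (hinv : ContinuousAt (Ring.inverse : A → A) 1)
    {p : Seminorm ℂ A} (hp : Continuous p) {s : ℝ} (hs : 0 < s)
    (hunit : ∀ z ∈ closedBall (0 : ℂ) s, IsUnit (1 - z • a)) :
    ∃ M, ∀ n : ℕ, p (a ^ n) ≤ M / s ^ n := by
  have hcont : ContinuousOn (fun z : ℂ => p (Ring.inverse (1 - z • a))) (sphere 0 s) :=
    fun z hz => (hp.continuousAt.comp (continuousAt_ringInverse_one_sub_smul hinv
      (hunit z (sphere_subset_closedBall hz)))).continuousWithinAt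
  obtain ⟨M, hM⟩ := (isCompact_sphere (0 : ℂ) s).bddAbove_image hcont
  refine ⟨M, fun n => ?_⟩
  obtain ⟨ψ, hψn, hψp⟩ := p.exists_strongDual_apply_eq hp (a ^ n)
  have hunit' : ∀ z ∈ closure (ball (0 : ℂ) s), IsUnit (1 - z • a) := by
    rwa [closure_ball _ hs.ne']
  have hrec : ∀ j, ∀ z ∈ sphere (0 : ℂ) s, ψ (a ^ j * Ring.inverse (1 - z • a)) =
      ψ (a ^ j * Ring.inverse (1 - (0 : ℂ) • a)) + z * ψ (a ^ (j + 1) * Ring.inverse (1 - z • a)) :=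
    fun j z hz => by
      conv_lhs => rw [ringInverse_one_sub_smul_eq a (hunit z (sphere_subset_closedBall hz))]
      simp [mul_add, pow_succ, mul_assoc]
  have hbound : ∀ z ∈ sphere (0 : ℂ) s, ‖ψ (a ^ 0 * Ring.inverse (1 - z • a))‖ ≤ M :=
    fun z hz => by simpa using (hψp _).trans (hM (mem_image_of_mem _ hz))
  simpa [hψn, abs_of_nonneg (apply_nonneg p _)] using norm_le_div_pow_of_eq_add_mul hs
    (fun j => diffContOnCl_mul_ringInverse_one_sub_smul hinv ψ (a ^ j) isOpen_ball hunit')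
    hrec hbound n

theorem tendsto_pow_atTop_nhds_zero_of_isUnit_one_sub_smul
    (hinv : ContinuousAt (Ring.inverse : A → A) 1) {s : ℝ} (hs : 1 < s)
    (hunit : ∀ z ∈ closedBall (0 : ℂ) s, IsUnit (1 - z • a)) :
    Tendsto (a ^ ·) atTop (𝓝 0) := by
  rw [(PolynormableSpace.withSeminorms ℂ A).tendsto_nhds _ 0]
  rintro ⟨p, hp⟩ ε hε
  obtain ⟨M, hM⟩ := exists_seminorm_pow_le_div_pow hinv hp (zero_lt_one.trans hs) hunit
  have hlim : Tendsto (fun n : ℕ => M / s ^ n) atTop (𝓝 0) :=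
    tendsto_const_nhds.div_atTop (tendsto_pow_atTop_atTop_of_one_lt hs)
  filter_upwards [hlim.eventually (gt_mem_nhds hε)] with n hn
  simpa using (hM n).trans_lt hn

end Complex

theorem tendsto_sum_range_pow_of_tendsto_pow {R : Type*} [Ring R] [TopologicalSpace R]
    [IsTopologicalRing R] {a : R} (ha : IsUnit (1 - a)) (h : Tendsto (a ^ ·) atTop (𝓝 0)) :
    Tendsto (fun N => ∑ n ∈ Finset.range N, a ^ n) atTop (𝓝 (Ring.inverse (1 - a))) := by
  have hsum (N : ℕ) : ∑ n ∈ Finset.range N, a ^ n = (1 - a ^ N) * Ring.inverse (1 - a) := by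
    rw [← geom_sum_mul_neg, mul_assoc, Ring.mul_inverse_cancel _ ha, mul_one]
  simp_rw [hsum]
  simpa using ((tendsto_const_nhds (x := 1)).sub h).mul_const (Ring.inverse (1 - a))

theorem neumann_series_of_spectralRadius_lt_one_general
    {A : Type*} [Ring A] [Algebra ℂ A] [UniformSpace A]
    [IsTopologicalRing A] [ContinuousSMul ℂ A] [LocallyConvexSpace ℝ A]
    (hA : IsCIA A) (a : A)
    (hr : ∃ r : ℝ, r < 1 ∧ ∀ lam ∈ spectrum ℂ a, ‖lam‖ ≤ r) :
    ∃ b : A,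
      Filter.Tendsto (fun N : ℕ => ∑ n ∈ Finset.range N, a ^ n) Filter.atTop (nhds b) ∧
      (1 - a) * b = 1 ∧ b * (1 - a) = 1 ∧ IsUnit (1 - a) := by
  obtain ⟨r, hr₁, hr⟩ := hr
  obtain ⟨s, hs, hunit⟩ := exists_one_lt_forall_mem_closedBall_isUnit_one_sub_smul hr₁ hr
  have : ContinuousSMul ℝ A := IsScalarTower.continuousSMul ℂ
  have : LocallyConvexSpace ℂ A := LocallyConvexSpace.of_real ℂ A
  have hunit₁ : IsUnit (1 - a) := by simpa using hunit 1 (by simp [hs.le])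
  exact ⟨_, tendsto_sum_range_pow_of_tendsto_pow hunit₁
      (tendsto_pow_atTop_nhds_zero_of_isUnit_one_sub_smul hA.2 hs hunit),
    Ring.mul_inverse_cancel _ hunit₁, Ring.inverse_mul_cancel _ hunit₁, hunit₁⟩

/-- Let `A` be a complete complex CIA and `a ∈ A` with spectral radius
`r_A(a) < 1`. Then the Neumann series `∑ aⁿ` converges in `A` and its sum is an
inverse of `1 - a`; in particular `1 - a` is invertible. -/
theorem neumann_series_of_spectralRadius_lt_one
    {A : Type*} [Ring A] [Algebra ℂ A] [UniformSpace A] [IsUniformAddGroup A]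
    [IsTopologicalRing A] [ContinuousSMul ℂ A] [LocallyConvexSpace ℝ A] [CompleteSpace A]
    (hA : IsCIA A) (a : A)
    (hr : ∃ r : ℝ, r < 1 ∧ ∀ lam ∈ spectrum ℂ a, ‖lam‖ ≤ r) :
    ∃ b : A,
      Filter.Tendsto (fun N : ℕ => ∑ n ∈ Finset.range N, a ^ n) Filter.atTop (nhds b) ∧
      (1 - a) * b = 1 ∧ b * (1 - a) = 1 ∧ IsUnit (1 - a) :=
  neumann_series_of_spectralRadius_lt_one_general hA a hr
end
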